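/- arXiv:0711.1213 — 3 statements merged into one kernel-verified Lean document; each statement's English description precedes it below -/
import Mathlib

section
/- If y(x) satisfies y'' + (y')^3 - y' = 0, and u(x) = (1/√2) exp(-x + y(x)), v(x) = (1/√2) exp(-x - y(x)), then u' v'' - v' u'' = 0, i.e. the point transformation (x,y) ↦ (u,v) maps the ODE to the free-particle equation d^2 v/du^2 = 0. -/
/-!
Writing `u = c e^g` and `v = c e^h` with `g = y - x`, `h = -y - x`, one has `u' = u g'`,
`u'' = u (g'² + g'')` and likewise for `v`, so
`u' v'' - v' u'' = u v (g' (h'² + h'') - h' (g'² + g''))`.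
Substituting `g' = y' - 1`, `h' = -y' - 1`, `g'' = y''`, `h'' = -y''` turns the bracket into
`2 (y'' + y'³ - y')`, which vanishes by the ODE.
-/

open Filter Topology Real

section ConstMulExp

variable {g g' : ℝ → ℝ} {g'' x : ℝ}

theorem deriv_const_mul_exp_comp (c : ℝ) (hg : HasDerivAt g (g' x) x) :
    deriv (fun t => c * exp (g t)) x = c * exp (g x) * g' x := by
  rw [(hg.exp.const_mul c).deriv, mul_assoc]

theorem deriv_deriv_const_mul_exp_comp (c : ℝ) (hg : ∀ᶠ t in 𝓝 x, HasDerivAt g (g' t) t)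
    (hg' : HasDerivAt g' g'' x) :
    deriv (deriv fun t => c * exp (g t)) x = c * exp (g x) * (g' x ^ 2 + g'') := by
  have hderiv : deriv (fun t => c * exp (g t)) =ᶠ[𝓝 x] fun t => c * exp (g t) * g' t :=
    hg.mono fun t ht => deriv_const_mul_exp_comp c ht
  rw [hderiv.deriv_eq]
  exact ((hg.self_of_nhds.exp.const_mul c).mul hg').deriv.trans (by ring)

end ConstMulExp

/-- If `y` satisfies `y'' + (y')³ - y' = 0` on an open interval and
`u = exp(y - x)/√2`, `v = exp(-y - x)/√2`, then `u' v'' - v' u'' = 0`,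
i.e. the point transformation maps the ODE to `d²v/du² = 0`. -/
theorem stmt1 (y : ℝ → ℝ) (I : Set ℝ) (hI : IsOpen I)
    (hy1 : ∀ x ∈ I, DifferentiableAt ℝ y x)
    (hy2 : ∀ x ∈ I, DifferentiableAt ℝ (deriv y) x)
    (hode : ∀ x ∈ I, deriv (deriv y) x + (deriv y x) ^ 3 - deriv y x = 0)
    (u v : ℝ → ℝ)
    (hu : ∀ x, u x = (1 / Real.sqrt 2) * Real.exp (-x + y x))
    (hv : ∀ x, v x = (1 / Real.sqrt 2) * Real.exp (-x - y x)) :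
    ∀ x ∈ I, deriv u x * deriv (deriv v) x - deriv v x * deriv (deriv u) x = 0 := by
  obtain rfl : u = _ := funext hu
  obtain rfl : v = _ := funext hv
  intro x hx
  have hy : ∀ᶠ t in 𝓝 x, HasDerivAt y (deriv y t) t :=
    eventually_of_mem (hI.mem_nhds hx) fun t ht => (hy1 t ht).hasDerivAt
  set g' := fun t => deriv y t - 1
  set h' := fun t => -deriv y t - 1
  have hg : ∀ᶠ t in 𝓝 x, HasDerivAt (fun s => -s + y s) (g' t) t :=
    hy.mono fun t ht => ((hasDerivAt_neg t).add ht).congr_deriv (by ring)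
  have hh : ∀ᶠ t in 𝓝 x, HasDerivAt (fun s => -s - y s) (h' t) t :=
    hy.mono fun t ht => ((hasDerivAt_neg t).sub ht).congr_deriv (by ring)
  have hy' := (hy2 x hx).hasDerivAt
  rw [deriv_const_mul_exp_comp _ hg.self_of_nhds, deriv_const_mul_exp_comp _ hh.self_of_nhds,
    deriv_deriv_const_mul_exp_comp _ hg (hy'.sub_const 1),
    deriv_deriv_const_mul_exp_comp _ hh (hy'.neg.sub_const 1)]
  linear_combination 2 * (1 / √2) ^ 2 * exp (-x + y x) * exp (-x - y x) * hode x hx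
end

section
/- If b and e satisfy Lie's overdetermined system b_x = -(1/3)E_{1y} + (2/3)E_{2x} + be - E₀E₃, b_y = E_{3x} - b² + bE₂ - E₁E₃ + eE₃, e_x = E_{0y} + e² - eE₁ - bE₀ + E₀E₂, e_y = (2/3)E_{1y} - (1/3)E_{2x} - be + E₀E₃, and all functions are twice continuously differentiable, then the Tressé conditions hold: 3(E₁E₃)_x - E_{1yy} + 2E_{2xy} - 3(E₀E₃)_y + E₂E_{1y} - 2E₂E_{2x} - 3E_{3xx} - 3E₃E_{0y} = 0 and 3(E₀E₃)_x + 2E_{1xy} - 3E_{0yy} - E_{2xx} - E₁E_{2x} + 2E₁E_{1y} - 3(E₀E₂)_y + 3E₀E_{3x} = 0. -/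
/-!
Differentiate the Lie equations for `b_x` in `y` and for `b_y` in `x`, and likewise for `e`.
By Schwarz's theorem `b_xy = b_yx` and `e_xy = e_yx`; substituting the Lie system back for the
first derivatives of `b` and `e`, all terms in `b` and `e` cancel. Three times the identity for `b`
is the first Tressé condition; minus three times the one for `e`, plus `2 (E_1xy - E_1yx) = 0`,
is the second.
-/

/-- Partial derivative of a two-variable function in the first variable. -/
noncomputable def pX (f : ℝ → ℝ → ℝ) : ℝ → ℝ → ℝ :=
  fun x y => deriv (fun t => f t y) x

/-- Partial derivative of a two-variable function in the second variable. -/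
noncomputable def pY (f : ℝ → ℝ → ℝ) : ℝ → ℝ → ℝ :=
  fun x y => deriv (fun t => f x t) y

open Function

section PartialDerivatives

variable {F G : ℝ → ℝ → ℝ}

theorem hasDerivAt_fderiv_apply_left {x y : ℝ} (hF : DifferentiableAt ℝ (uncurry F) (x, y)) :
    HasDerivAt (fun t => F t y) (fderiv ℝ (uncurry F) (x, y) (1, 0)) x :=
  hF.hasFDerivAt.comp_hasDerivAt (f := fun t => (t, y)) x
    ((hasDerivAt_id x).prodMk (hasDerivAt_const x y))

theorem hasDerivAt_fderiv_apply_right {x y : ℝ} (hF : DifferentiableAt ℝ (uncurry F) (x, y)) :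
    HasDerivAt (fun t => F x t) (fderiv ℝ (uncurry F) (x, y) (0, 1)) y :=
  hF.hasFDerivAt.comp_hasDerivAt (f := fun t => (x, t)) y
    ((hasDerivAt_const y x).prodMk (hasDerivAt_id y))

theorem pX_eq_fderiv_apply {x y : ℝ} (hF : DifferentiableAt ℝ (uncurry F) (x, y)) :
    pX F x y = fderiv ℝ (uncurry F) (x, y) (1, 0) :=
  (hasDerivAt_fderiv_apply_left hF).deriv

theorem pY_eq_fderiv_apply {x y : ℝ} (hF : DifferentiableAt ℝ (uncurry F) (x, y)) :
    pY F x y = fderiv ℝ (uncurry F) (x, y) (0, 1) :=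
  (hasDerivAt_fderiv_apply_right hF).deriv

theorem hasDerivAt_pX (hF : Differentiable ℝ (uncurry F)) (x y : ℝ) :
    HasDerivAt (fun t => F t y) (pX F x y) x := by
  rw [pX_eq_fderiv_apply (hF _)]
  exact hasDerivAt_fderiv_apply_left (hF _)

theorem hasDerivAt_pY (hF : Differentiable ℝ (uncurry F)) (x y : ℝ) :
    HasDerivAt (fun t => F x t) (pY F x y) y := by
  rw [pY_eq_fderiv_apply (hF _)]
  exact hasDerivAt_fderiv_apply_right (hF _)

theorem pX_mul (hF : Differentiable ℝ (uncurry F)) (hG : Differentiable ℝ (uncurry G)) (x y : ℝ) :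
    pX (fun x y => F x y * G x y) x y = pX F x y * G x y + F x y * pX G x y :=
  ((hasDerivAt_pX hF x y).mul (hasDerivAt_pX hG x y)).deriv

theorem pY_mul (hF : Differentiable ℝ (uncurry F)) (hG : Differentiable ℝ (uncurry G)) (x y : ℝ) :
    pY (fun x y => F x y * G x y) x y = pY F x y * G x y + F x y * pY G x y :=
  ((hasDerivAt_pY hF x y).mul (hasDerivAt_pY hG x y)).deriv

theorem uncurry_pX_eq (hF : Differentiable ℝ (uncurry F)) :
    uncurry (pX F) = fun p => fderiv ℝ (uncurry F) p (1, 0) :=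
  funext fun p => pX_eq_fderiv_apply (hF p)

theorem uncurry_pY_eq (hF : Differentiable ℝ (uncurry F)) :
    uncurry (pY F) = fun p => fderiv ℝ (uncurry F) p (0, 1) :=
  funext fun p => pY_eq_fderiv_apply (hF p)

theorem ContDiff.uncurry_pX {m n : WithTop ℕ∞} (hF : ContDiff ℝ n (uncurry F)) (hmn : m + 1 ≤ n) :
    ContDiff ℝ m (uncurry (pX F)) := by
  rw [uncurry_pX_eq (hF.differentiable (ne_bot_of_le_ne_bot one_ne_zero (le_add_self.trans hmn)))]
  exact (hF.fderiv_right hmn).clm_apply contDiff_const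

theorem ContDiff.uncurry_pY {m n : WithTop ℕ∞} (hF : ContDiff ℝ n (uncurry F)) (hmn : m + 1 ≤ n) :
    ContDiff ℝ m (uncurry (pY F)) := by
  rw [uncurry_pY_eq (hF.differentiable (ne_bot_of_le_ne_bot one_ne_zero (le_add_self.trans hmn)))]
  exact (hF.fderiv_right hmn).clm_apply contDiff_const

theorem ContDiff.differentiable_uncurry_pX (hF : ContDiff ℝ 2 (uncurry F)) :
    Differentiable ℝ (uncurry (pX F)) :=
  (hF.uncurry_pX (m := 1) (by norm_num)).differentiable one_ne_zero

theorem ContDiff.differentiable_uncurry_pY (hF : ContDiff ℝ 2 (uncurry F)) :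
    Differentiable ℝ (uncurry (pY F)) :=
  (hF.uncurry_pY (m := 1) (by norm_num)).differentiable one_ne_zero

theorem pY_pX_eq_pX_pY (hF : ContDiff ℝ 2 (uncurry F)) (x y : ℝ) :
    pY (pX F) x y = pX (pY F) x y := by
  have hF' : Differentiable ℝ (uncurry F) := hF.differentiable two_ne_zero
  have hDF : Differentiable ℝ (fderiv ℝ (uncurry F)) :=
    (hF.fderiv_right (m := 1) (by norm_num)).differentiable one_ne_zero
  have fderiv_fderiv_apply (v w : ℝ × ℝ) :
      fderiv ℝ (fun p => fderiv ℝ (uncurry F) p v) (x, y) w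
        = fderiv ℝ (fderiv ℝ (uncurry F)) (x, y) w v := by
    rw [fderiv_clm_apply (hDF _) (differentiableAt_const v)]
    simp
  rw [pY_eq_fderiv_apply (hF.differentiable_uncurry_pX _),
    pX_eq_fderiv_apply (hF.differentiable_uncurry_pY _), uncurry_pX_eq hF', uncurry_pY_eq hF',
    fderiv_fderiv_apply, fderiv_fderiv_apply]
  exact hF.contDiffAt.isSymmSndFDerivAt (by simp) _ _

end PartialDerivatives

section LieSystem

variable {E0 E1 E2 E3 b e : ℝ → ℝ → ℝ}

theorem pY_pX_b_of_lie (hLie1 : ∀ x y : ℝ, pX b x y = -(1 / 3) * pY E1 x y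
      + (2 / 3) * pX E2 x y + b x y * e x y - E0 x y * E3 x y)
    (hE0 : ContDiff ℝ 2 (uncurry E0)) (hE1 : ContDiff ℝ 2 (uncurry E1))
    (hE2 : ContDiff ℝ 2 (uncurry E2)) (hE3 : ContDiff ℝ 2 (uncurry E3))
    (hb : ContDiff ℝ 2 (uncurry b)) (he : ContDiff ℝ 2 (uncurry e)) (x y : ℝ) :
    pY (pX b) x y = -(1 / 3) * pY (pY E1) x y + (2 / 3) * pY (pX E2) x y
      + pY b x y * e x y + b x y * pY e x y - pY E0 x y * E3 x y - E0 x y * pY E3 x y := by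
  change deriv (fun t => pX b x t) y = _
  simp only [hLie1]
  refine ((((hasDerivAt_pY hE1.differentiable_uncurry_pY x y).const_mul _).add
      ((hasDerivAt_pY hE2.differentiable_uncurry_pX x y).const_mul _)).add
      ((hasDerivAt_pY (hb.differentiable two_ne_zero) x y).mul
        (hasDerivAt_pY (he.differentiable two_ne_zero) x y))).sub
      ((hasDerivAt_pY (hE0.differentiable two_ne_zero) x y).mul
        (hasDerivAt_pY (hE3.differentiable two_ne_zero) x y)) |>.deriv.trans ?_
  ring

theorem pX_pY_b_of_lie (hLie2 : ∀ x y : ℝ, pY b x y = pX E3 x y - (b x y) ^ 2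
      + b x y * E2 x y - E1 x y * E3 x y + e x y * E3 x y)
    (hE1 : ContDiff ℝ 2 (uncurry E1)) (hE2 : ContDiff ℝ 2 (uncurry E2))
    (hE3 : ContDiff ℝ 2 (uncurry E3)) (hb : ContDiff ℝ 2 (uncurry b))
    (he : ContDiff ℝ 2 (uncurry e)) (x y : ℝ) :
    pX (pY b) x y = pX (pX E3) x y - 2 * b x y * pX b x y + pX b x y * E2 x y
      + b x y * pX E2 x y - pX E1 x y * E3 x y - E1 x y * pX E3 x y
      + pX e x y * E3 x y + e x y * pX E3 x y := by
  change deriv (fun t => pY b t y) x = _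
  simp only [hLie2]
  have hb' := hasDerivAt_pX (hb.differentiable two_ne_zero) x y
  have hE3' := hasDerivAt_pX (hE3.differentiable two_ne_zero) x y
  refine ((((hasDerivAt_pX hE3.differentiable_uncurry_pX x y).sub (hb'.pow 2)).add
      (hb'.mul (hasDerivAt_pX (hE2.differentiable two_ne_zero) x y))).sub
      ((hasDerivAt_pX (hE1.differentiable two_ne_zero) x y).mul hE3')).add
      ((hasDerivAt_pX (he.differentiable two_ne_zero) x y).mul hE3') |>.deriv.trans ?_
  ring

theorem pY_pX_e_of_lie (hLie3 : ∀ x y : ℝ, pX e x y = pY E0 x y + (e x y) ^ 2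
      - e x y * E1 x y - b x y * E0 x y + E0 x y * E2 x y)
    (hE0 : ContDiff ℝ 2 (uncurry E0)) (hE1 : ContDiff ℝ 2 (uncurry E1))
    (hE2 : ContDiff ℝ 2 (uncurry E2)) (hb : ContDiff ℝ 2 (uncurry b))
    (he : ContDiff ℝ 2 (uncurry e)) (x y : ℝ) :
    pY (pX e) x y = pY (pY E0) x y + 2 * e x y * pY e x y - pY e x y * E1 x y
      - e x y * pY E1 x y - pY b x y * E0 x y - b x y * pY E0 x y
      + pY E0 x y * E2 x y + E0 x y * pY E2 x y := by
  change deriv (fun t => pX e x t) y = _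
  simp only [hLie3]
  have he' := hasDerivAt_pY (he.differentiable two_ne_zero) x y
  have hE0' := hasDerivAt_pY (hE0.differentiable two_ne_zero) x y
  refine ((((hasDerivAt_pY hE0.differentiable_uncurry_pY x y).add (he'.pow 2)).sub
      (he'.mul (hasDerivAt_pY (hE1.differentiable two_ne_zero) x y))).sub
      ((hasDerivAt_pY (hb.differentiable two_ne_zero) x y).mul hE0')).add
      (hE0'.mul (hasDerivAt_pY (hE2.differentiable two_ne_zero) x y)) |>.deriv.trans ?_
  ring

theorem pX_pY_e_of_lie (hLie4 : ∀ x y : ℝ, pY e x y = (2 / 3) * pY E1 x y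
      - (1 / 3) * pX E2 x y - b x y * e x y + E0 x y * E3 x y)
    (hE0 : ContDiff ℝ 2 (uncurry E0)) (hE1 : ContDiff ℝ 2 (uncurry E1))
    (hE2 : ContDiff ℝ 2 (uncurry E2)) (hE3 : ContDiff ℝ 2 (uncurry E3))
    (hb : ContDiff ℝ 2 (uncurry b)) (he : ContDiff ℝ 2 (uncurry e)) (x y : ℝ) :
    pX (pY e) x y = (2 / 3) * pX (pY E1) x y - (1 / 3) * pX (pX E2) x y
      - pX b x y * e x y - b x y * pX e x y + pX E0 x y * E3 x y + E0 x y * pX E3 x y := by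
  change deriv (fun t => pY e t y) x = _
  simp only [hLie4]
  refine ((((hasDerivAt_pX hE1.differentiable_uncurry_pY x y).const_mul _).sub
      ((hasDerivAt_pX hE2.differentiable_uncurry_pX x y).const_mul _)).sub
      ((hasDerivAt_pX (hb.differentiable two_ne_zero) x y).mul
        (hasDerivAt_pX (he.differentiable two_ne_zero) x y))).add
      ((hasDerivAt_pX (hE0.differentiable two_ne_zero) x y).mul
        (hasDerivAt_pX (hE3.differentiable two_ne_zero) x y)) |>.deriv.trans ?_
  ring

end LieSystem

/-- If `b` and `e` satisfy Lie's overdetermined system and all functions are C²,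
then the Tressé conditions hold. -/
theorem stmt7 (E0 E1 E2 E3 b e : ℝ → ℝ → ℝ)
    (hC2 : ∀ F ∈ [E0, E1, E2, E3, b, e],
      ContDiff ℝ 2 (fun p : ℝ × ℝ => F p.1 p.2))
    (hLie1 : ∀ x y : ℝ, pX b x y = -(1 / 3) * pY E1 x y + (2 / 3) * pX E2 x y
        + b x y * e x y - E0 x y * E3 x y)
    (hLie2 : ∀ x y : ℝ, pY b x y = pX E3 x y - (b x y) ^ 2 + b x y * E2 x y
        - E1 x y * E3 x y + e x y * E3 x y)
    (hLie3 : ∀ x y : ℝ, pX e x y = pY E0 x y + (e x y) ^ 2 - e x y * E1 x y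
        - b x y * E0 x y + E0 x y * E2 x y)
    (hLie4 : ∀ x y : ℝ, pY e x y = (2 / 3) * pY E1 x y - (1 / 3) * pX E2 x y
        - b x y * e x y + E0 x y * E3 x y) :
    ∀ x y : ℝ,
      (3 * pX (fun x y => E1 x y * E3 x y) x y
        - pY (pY E1) x y + 2 * pY (pX E2) x y
        - 3 * pY (fun x y => E0 x y * E3 x y) x y
        + E2 x y * pY E1 x y - 2 * E2 x y * pX E2 x y
        - 3 * pX (pX E3) x y - 3 * E3 x y * pY E0 x y = 0) ∧
      (3 * pX (fun x y => E0 x y * E3 x y) x y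
        + 2 * pY (pX E1) x y - 3 * pY (pY E0) x y
        - pX (pX E2) x y - E1 x y * pX E2 x y + 2 * E1 x y * pY E1 x y
        - 3 * pY (fun x y => E0 x y * E2 x y) x y + 3 * E0 x y * pX E3 x y = 0) := by
  have hE0 : ContDiff ℝ 2 (uncurry E0) := hC2 E0 (by simp)
  have hE1 : ContDiff ℝ 2 (uncurry E1) := hC2 E1 (by simp)
  have hE2 : ContDiff ℝ 2 (uncurry E2) := hC2 E2 (by simp)
  have hE3 : ContDiff ℝ 2 (uncurry E3) := hC2 E3 (by simp)
  have hb : ContDiff ℝ 2 (uncurry b) := hC2 b (by simp)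
  have he : ContDiff ℝ 2 (uncurry e) := hC2 e (by simp)
  intro x y
  have hb_mixed := pY_pX_eq_pX_pY hb x y
  have he_mixed := pY_pX_eq_pX_pY he x y
  rw [pY_pX_b_of_lie hLie1 hE0 hE1 hE2 hE3 hb he, pX_pY_b_of_lie hLie2 hE1 hE2 hE3 hb he]
    at hb_mixed
  rw [pY_pX_e_of_lie hLie3 hE0 hE1 hE2 hb he, pX_pY_e_of_lie hLie4 hE0 hE1 hE2 hE3 hb he]
    at he_mixed
  simp only [hLie1, hLie2, hLie3, hLie4] at hb_mixed he_mixed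
  constructor
  · rw [pX_mul (hE1.differentiable two_ne_zero) (hE3.differentiable two_ne_zero),
      pY_mul (hE0.differentiable two_ne_zero) (hE3.differentiable two_ne_zero)]
    linear_combination 3 * hb_mixed
  · rw [pX_mul (hE0.differentiable two_ne_zero) (hE3.differentiable two_ne_zero),
      pY_mul (hE0.differentiable two_ne_zero) (hE2.differentiable two_ne_zero)]
    linear_combination -3 * he_mixed + 2 * pY_pX_eq_pX_pY hE1 x y
end

section
/- If X¹, ..., Xⁿ are smooth functions of (x¹, ..., xⁿ) and along a curve the functions Xⁱ (i ≥ 2) are affine functions of X¹ (i.e. d²Xⁱ/d(X¹)² = 0 along the curve with X¹ as parameter), then the curve components xⁱ(x¹) satisfy J^i_j (x^j)'' + G^i_{kj}(x^k)'(x^j)'' + Δ^i_{jkl}(x^j)'(x^k)'(x^l)' + Λ^i_{jk}(x^j)'(x^k)' + Ω^i_j(x^j)' + E^i = 0 for i = 2,...,n, where J^i_j = X¹_{,1}X^i_{,j} - X¹_{,j}X^i_{,1}, G^i_{kj} = X¹_{,k}X^i_{,j} - X¹_{,j}X^i_{,k}, Δ^i_{jkl} = X¹_{,l}X^i_{,jk}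 - X¹_{,jk}X^i_{,l}, Λ^i_{jl} = 2X¹_{,l}X^i_{,1j} - 2X¹_{,1j}X^i_{,l} + X¹_{,1}X^i_{,jl} - X^i_{,1}X¹_{,jl}, Ω^i_j = 2X¹_{,1}X^i_{,1j} - 2X¹_{,1j}X^i_{,1} + X¹_{,j}X^i_{,11} - X¹_{,11}X^i_{,j}, E^i = X¹_{,1}X^i_{,11} - X¹_{,11}X^i_{,1}, with indices j,k,l ranging over 2,...,n (repeated indices summed) and prime denoting d/dx¹. -/
/-- Partial derivative of `f : (Fin n → ℝ) → ℝ` in the `j`-th coordinate at `p`. -/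
noncomputable def pdrv {n : ℕ} (j : Fin n) (f : (Fin n → ℝ) → ℝ) (p : Fin n → ℝ) : ℝ :=
  deriv (fun s => f (Function.update p j s)) (p j)

/-!
Along `γ(t) = (t, x²(t), …, xⁿ(t))` we have `(x¹)' = 1` and `(x¹)'' = 0`, so the chain rule gives
`(Xʳ∘γ)' = Xʳ,₁ + Xʳ,ⱼ (xʲ)'` and
`(Xʳ∘γ)'' = Xʳ,₁₁ + 2 Xʳ,₁ⱼ (xʲ)' + Xʳ,ⱼₖ (xʲ)'(xᵏ)' + Xʳ,ⱼ (xʲ)''`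
(using the symmetry of second partials). Substituting these into the affineness condition
`(Xⁱ∘γ)'' (X¹∘γ)' - (Xⁱ∘γ)' (X¹∘γ)'' = 0` and sorting by monomials in the derivatives of the `xʲ`
gives exactly the six terms with coefficients `J, G, Δ, Λ, Ω, E`. The paper's index `1` is
`0 : Fin n`.
-/

open Finset

section Calculus

variable {n : ℕ} {f : (Fin n → ℝ) → ℝ}

theorem pdrv_eq_fderiv (j : Fin n) {p : Fin n → ℝ} (hf : DifferentiableAt ℝ f p) :
    pdrv j f p = fderiv ℝ f p (Pi.single j 1) := by
  rw [← Function.update_eq_self j p] at hf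
  have h := hf.hasFDerivAt.comp_hasDerivAt (p j) (hasDerivAt_update p j (p j))
  rw [Function.update_eq_self j p] at h
  exact h.deriv

theorem fderiv_apply_eq_sum_pdrv {p : Fin n → ℝ} (hf : DifferentiableAt ℝ f p) (v : Fin n → ℝ) :
    fderiv ℝ f p v = ∑ m, v m * pdrv m f p := by
  conv_lhs => rw [pi_eq_sum_univ' v]
  simp [pdrv_eq_fderiv _ hf]

theorem contDiff_pdrv (hf : ContDiff ℝ 2 f) (j : Fin n) : ContDiff ℝ 1 (pdrv j f) := by
  have h : pdrv j f = fun p => fderiv ℝ f p (Pi.single j 1) :=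
    funext fun p => pdrv_eq_fderiv j (hf.differentiable two_ne_zero p)
  rw [h]
  exact (hf.fderiv_right (m := 1) le_rfl).clm_apply contDiff_const

theorem pdrv_pdrv_eq_fderiv_fderiv (hf : ContDiff ℝ 2 f) (j k : Fin n) (p : Fin n → ℝ) :
    pdrv k (pdrv j f) p = fderiv ℝ (fderiv ℝ f) p (Pi.single k 1) (Pi.single j 1) := by
  have h : pdrv j f = fun q => fderiv ℝ f q (Pi.single j 1) :=
    funext fun q => pdrv_eq_fderiv j (hf.differentiable two_ne_zero q)
  have hF : DifferentiableAt ℝ (fderiv ℝ f) p :=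
    (hf.fderiv_right (m := 1) le_rfl).differentiable one_ne_zero p
  rw [h, pdrv_eq_fderiv k (hF.clm_apply (differentiableAt_const _)),
    fderiv_clm_apply hF (differentiableAt_const _)]
  simp

theorem pdrv_pdrv_comm (hf : ContDiff ℝ 2 f) (j k : Fin n) (p : Fin n → ℝ) :
    pdrv k (pdrv j f) p = pdrv j (pdrv k f) p := by
  rw [pdrv_pdrv_eq_fderiv_fderiv hf, pdrv_pdrv_eq_fderiv_fderiv hf]
  exact hf.contDiffAt.isSymmSndFDerivAt (by simp) _ _

variable {x : Fin n → ℝ → ℝ} {t : ℝ}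

theorem hasDerivAt_comp_curve (hf : DifferentiableAt ℝ f fun m => x m t)
    (hx : ∀ m, DifferentiableAt ℝ (x m) t) :
    HasDerivAt (fun s => f fun m => x m s)
      (∑ m, deriv (x m) t * pdrv m f (fun m => x m t)) t := by
  rw [← fderiv_apply_eq_sum_pdrv hf]
  exact hf.hasFDerivAt.comp_hasDerivAt t (hasDerivAt_pi.2 fun m => (hx m).hasDerivAt)

theorem deriv_deriv_comp_curve (hf : ContDiff ℝ 2 f) (hx : ∀ m, ContDiff ℝ 2 (x m)) :
    deriv (deriv fun s => f fun m => x m s) t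
      = ∑ a, ∑ b, deriv (x a) t * deriv (x b) t * pdrv a (pdrv b f) (fun m => x m t)
        + ∑ m, deriv (deriv (x m)) t * pdrv m f (fun m => x m t) := by
  have hx1 (m : Fin n) : Differentiable ℝ (x m) := (hx m).differentiable two_ne_zero
  have hderiv : deriv (fun s => f fun m => x m s)
      = fun s => ∑ m, deriv (x m) s * pdrv m f (fun m => x m s) :=
    funext fun s => (hasDerivAt_comp_curve (hf.differentiable two_ne_zero _)
      fun m => hx1 m s).deriv
  have hsecond := HasDerivAt.fun_sum (u := univ)
    (A := fun m s => deriv (x m) s * pdrv m f fun m => x m s) fun m _ =>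
    ((hx m).differentiable_deriv_two t).hasDerivAt.mul
      (hasDerivAt_comp_curve (f := pdrv m f) (x := x)
        ((contDiff_pdrv hf m).differentiable one_ne_zero _) fun a => hx1 a t)
  rw [hderiv, hsecond.deriv, sum_add_distrib, add_comm]
  congr 1
  simp only [mul_sum]
  rw [sum_comm]
  exact sum_congr rfl fun a _ => sum_congr rfl fun b _ => by ring

end Calculus

section Algebra

variable {ι R : Type*} [CommRing R] (s : Finset ι)

theorem J_term_eq (a b w : ι → R) (P Q : R) :
    ∑ j ∈ s, (P * b j - a j * Q) * w j
      = P * ∑ j ∈ s, w j * b j - Q * ∑ j ∈ s, w j * a j := by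
  simp only [mul_sum, ← sum_sub_distrib]
  exact sum_congr rfl fun j _ => by ring

theorem G_term_eq (a b u w : ι → R) :
    ∑ k ∈ s, ∑ j ∈ s, (a k * b j - a j * b k) * u k * w j
      = (∑ k ∈ s, u k * a k) * ∑ j ∈ s, w j * b j
        - (∑ k ∈ s, u k * b k) * ∑ j ∈ s, w j * a j := by
  simp only [sum_mul_sum, ← sum_sub_distrib]
  exact sum_congr rfl fun k _ => sum_congr rfl fun j _ => by ring

theorem Delta_term_eq (a b u : ι → R) (Q₀ Q₁ : ι → ι → R) :
    ∑ j ∈ s, ∑ k ∈ s, ∑ l ∈ s, (a l * Q₁ k j - Q₀ k j * b l) * u j * u k * u l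
      = (∑ l ∈ s, u l * a l) * (∑ k ∈ s, ∑ j ∈ s, u k * u j * Q₁ k j)
        - (∑ l ∈ s, u l * b l) * ∑ k ∈ s, ∑ j ∈ s, u k * u j * Q₀ k j := by
  simp only [mul_sum, sum_mul, ← sum_sub_distrib]
  rw [sum_comm]
  exact sum_congr rfl fun k _ => sum_congr rfl fun j _ => sum_congr rfl fun l _ => by ring

theorem Lambda_term_eq (a b u r₀ r₁ : ι → R) (Q₀ Q₁ : ι → ι → R) (P₀ P₁ : R) :
    ∑ j ∈ s, ∑ l ∈ s,
        (2 * a l * r₁ j - 2 * r₀ j * b l + P₀ * Q₁ l j - P₁ * Q₀ l j) * u j * u l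
      = 2 * (∑ j ∈ s, u j * r₁ j) * (∑ l ∈ s, u l * a l)
        - 2 * (∑ j ∈ s, u j * r₀ j) * (∑ l ∈ s, u l * b l)
        + P₀ * (∑ l ∈ s, ∑ j ∈ s, u l * u j * Q₁ l j)
        - P₁ * ∑ l ∈ s, ∑ j ∈ s, u l * u j * Q₀ l j := by
  simp only [mul_sum, sum_mul, ← sum_sub_distrib, ← sum_add_distrib]
  rw [sum_comm]
  exact sum_congr rfl fun l _ => sum_congr rfl fun j _ => by ring

theorem Omega_term_eq (a b u r₀ r₁ : ι → R) (P₀ P₁ q₀ q₁ : R) :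
    ∑ j ∈ s, (2 * P₀ * r₁ j - 2 * r₀ j * P₁ + a j * q₁ - q₀ * b j) * u j
      = 2 * P₀ * (∑ j ∈ s, u j * r₁ j) - 2 * P₁ * (∑ j ∈ s, u j * r₀ j)
        + q₁ * (∑ j ∈ s, u j * a j) - q₀ * ∑ j ∈ s, u j * b j := by
  simp only [mul_sum, ← sum_sub_distrib, ← sum_add_distrib]
  exact sum_congr rfl fun j _ => by ring

variable [DecidableEq ι] {s} {o : ι}

theorem sum_mul_eq_add_sum_erase (ho : o ∈ s) {u : ι → R} (hu : u o = 1) (c : ι → R) :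
    ∑ m ∈ s, u m * c m = c o + ∑ m ∈ s.erase o, u m * c m := by
  rw [← add_sum_erase s _ ho, hu, one_mul]

theorem sum_sum_mul_eq_add_sum_erase (ho : o ∈ s) {u : ι → R} (hu : u o = 1) {Q : ι → ι → R}
    (hQ : ∀ a b, Q a b = Q b a) :
    ∑ a ∈ s, ∑ b ∈ s, u a * u b * Q a b
      = Q o o + 2 * ∑ b ∈ s.erase o, u b * Q o b
        + ∑ a ∈ s.erase o, ∑ b ∈ s.erase o, u a * u b * Q a b := by
  have hrow (a : ι) : ∑ b ∈ s, u a * u b * Q a b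
      = u a * Q o a + ∑ b ∈ s.erase o, u a * u b * Q a b := by
    rw [← add_sum_erase s _ ho, hu, mul_one, hQ]
  simp only [hrow]
  rw [← add_sum_erase s _ ho, sum_add_distrib, hu]
  simp only [one_mul]
  ring

-- With `u = x'`, `w = x''` and `Aʳ, Bʳ` the first and second partials of `Xʳ`, the right side is
-- `(Xⁱ∘γ)'' (X¹∘γ)' - (Xⁱ∘γ)' (X¹∘γ)''` expanded by the chain rule.
theorem six_terms_eq (ho : o ∈ s) {u w : ι → R} (hu : u o = 1) (hw : w o = 0)
    (A₀ A₁ : ι → R) {B₀ B₁ : ι → ι → R}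
    (hB₀ : ∀ a b, B₀ a b = B₀ b a) (hB₁ : ∀ a b, B₁ a b = B₁ b a) :
    (∑ j ∈ s.erase o, (A₀ o * A₁ j - A₀ j * A₁ o) * w j)
      + (∑ k ∈ s.erase o, ∑ j ∈ s.erase o, (A₀ k * A₁ j - A₀ j * A₁ k) * u k * w j)
      + (∑ j ∈ s.erase o, ∑ k ∈ s.erase o, ∑ l ∈ s.erase o,
          (A₀ l * B₁ k j - B₀ k j * A₁ l) * u j * u k * u l)
      + (∑ j ∈ s.erase o, ∑ l ∈ s.erase o,
          (2 * A₀ l * B₁ o j - 2 * B₀ o j * A₁ l + A₀ o * B₁ l j - A₁ o * B₀ l j) * u j * u l)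
      + (∑ j ∈ s.erase o,
          (2 * A₀ o * B₁ o j - 2 * B₀ o j * A₁ o + A₀ j * B₁ o o - B₀ o o * A₁ j) * u j)
      + (A₀ o * B₁ o o - B₀ o o * A₁ o)
      = (∑ a ∈ s, ∑ b ∈ s, u a * u b * B₁ a b + ∑ m ∈ s, w m * A₁ m) * ∑ m ∈ s, u m * A₀ m
        - (∑ m ∈ s, u m * A₁ m)
          * (∑ a ∈ s, ∑ b ∈ s, u a * u b * B₀ a b + ∑ m ∈ s, w m * A₀ m) := by
  have hw_erase (A : ι → R) : ∑ m ∈ s, w m * A m = ∑ m ∈ s.erase o, w m * A m :=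
    (sum_erase s (f := fun m => w m * A m) (by simp [hw])).symm
  rw [J_term_eq, G_term_eq, Delta_term_eq, Lambda_term_eq, Omega_term_eq,
    sum_mul_eq_add_sum_erase ho hu A₀, sum_mul_eq_add_sum_erase ho hu A₁, hw_erase, hw_erase,
    sum_sum_mul_eq_add_sum_erase ho hu hB₀, sum_sum_mul_eq_add_sum_erase ho hu hB₁]
  ring

end Algebra

theorem stmt13_general (n : ℕ) [NeZero n]
    (X : Fin n → (Fin n → ℝ) → ℝ) (hX : ∀ i, ContDiff ℝ 2 (X i))
    (x : Fin n → ℝ → ℝ) (hx0 : ∀ t, x 0 t = t) (hxC : ∀ i, ContDiff ℝ 2 (x i))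
    (haff : ∀ t : ℝ, ∀ i : Fin n, i ≠ 0 →
      deriv (deriv (fun s => X i (fun m => x m s))) t
          * deriv (fun s => X 0 (fun m => x m s)) t
        = deriv (fun s => X i (fun m => x m s)) t
          * deriv (deriv (fun s => X 0 (fun m => x m s))) t) :
    ∀ t : ℝ, ∀ i : Fin n, i ≠ 0 →
      (∑ j ∈ Finset.univ.erase (0 : Fin n),
          (pdrv 0 (X 0) (fun m => x m t) * pdrv j (X i) (fun m => x m t)
            - pdrv j (X 0) (fun m => x m t) * pdrv 0 (X i) (fun m => x m t))
          * deriv (deriv (x j)) t)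
      + (∑ k ∈ Finset.univ.erase (0 : Fin n), ∑ j ∈ Finset.univ.erase (0 : Fin n),
          (pdrv k (X 0) (fun m => x m t) * pdrv j (X i) (fun m => x m t)
            - pdrv j (X 0) (fun m => x m t) * pdrv k (X i) (fun m => x m t))
          * deriv (x k) t * deriv (deriv (x j)) t)
      + (∑ j ∈ Finset.univ.erase (0 : Fin n), ∑ k ∈ Finset.univ.erase (0 : Fin n),
          ∑ l ∈ Finset.univ.erase (0 : Fin n),
          (pdrv l (X 0) (fun m => x m t) * pdrv k (pdrv j (X i)) (fun m => x m t)
            - pdrv k (pdrv j (X 0)) (fun m => x m t) * pdrv l (X i) (fun m => x m t))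
          * deriv (x j) t * deriv (x k) t * deriv (x l) t)
      + (∑ j ∈ Finset.univ.erase (0 : Fin n), ∑ l ∈ Finset.univ.erase (0 : Fin n),
          (2 * pdrv l (X 0) (fun m => x m t) * pdrv 0 (pdrv j (X i)) (fun m => x m t)
            - 2 * pdrv 0 (pdrv j (X 0)) (fun m => x m t) * pdrv l (X i) (fun m => x m t)
            + pdrv 0 (X 0) (fun m => x m t) * pdrv l (pdrv j (X i)) (fun m => x m t)
            - pdrv 0 (X i) (fun m => x m t) * pdrv l (pdrv j (X 0)) (fun m => x m t))
          * deriv (x j) t * deriv (x l) t)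
      + (∑ j ∈ Finset.univ.erase (0 : Fin n),
          (2 * pdrv 0 (X 0) (fun m => x m t) * pdrv 0 (pdrv j (X i)) (fun m => x m t)
            - 2 * pdrv 0 (pdrv j (X 0)) (fun m => x m t) * pdrv 0 (X i) (fun m => x m t)
            + pdrv j (X 0) (fun m => x m t) * pdrv 0 (pdrv 0 (X i)) (fun m => x m t)
            - pdrv 0 (pdrv 0 (X 0)) (fun m => x m t) * pdrv j (X i) (fun m => x m t))
          * deriv (x j) t)
      + (pdrv 0 (X 0) (fun m => x m t) * pdrv 0 (pdrv 0 (X i)) (fun m => x m t)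
          - pdrv 0 (pdrv 0 (X 0)) (fun m => x m t) * pdrv 0 (X i) (fun m => x m t))
      = 0 := by
  intro t i hi
  have hx0' : x 0 = id := funext hx0
  have hu : deriv (x 0) t = 1 := by simp [hx0']
  have hw : deriv (deriv (x 0)) t = 0 := by simp [hx0']
  have hxt (m : Fin n) : DifferentiableAt ℝ (x m) t := (hxC m).differentiable two_ne_zero t
  have hXt (r : Fin n) := (hX r).differentiable two_ne_zero (fun m => x m t)
  have key := haff t i hi
  rw [deriv_deriv_comp_curve (hX i) hxC, deriv_deriv_comp_curve (hX 0) hxC,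
    (hasDerivAt_comp_curve (hXt i) hxt).deriv, (hasDerivAt_comp_curve (hXt 0) hxt).deriv] at key
  rw [six_terms_eq (mem_univ 0) hu hw (fun j => pdrv j (X 0) (fun m => x m t))
    (fun j => pdrv j (X i) (fun m => x m t)) (fun a b => pdrv_pdrv_comm (hX 0) b a _)
    (fun a b => pdrv_pdrv_comm (hX i) b a _)]
  linear_combination key

/-- If the `Xⁱ` (`i ≥ 2`) are affine functions of `X¹` along the curve
`γ(t) = (t, x²(t), …, xⁿ(t))`, then the curve components satisfy the general
linearizable system `Jⁱⱼ(xʲ)'' + Gⁱₖⱼ(xᵏ)'(xʲ)'' + Δⁱⱼₖₗ(xʲ)'(xᵏ)'(xˡ)'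
+ Λⁱⱼₖ(xʲ)'(xᵏ)' + Ωⁱⱼ(xʲ)' + Eⁱ = 0` with the stated coefficients. -/
theorem stmt13 (n : ℕ) [NeZero n] (hn : 2 ≤ n)
    (X : Fin n → (Fin n → ℝ) → ℝ) (hX : ∀ i, ContDiff ℝ 2 (X i))
    (x : Fin n → ℝ → ℝ) (hx0 : ∀ t, x 0 t = t) (hxC : ∀ i, ContDiff ℝ 2 (x i))
    (hne : ∀ t : ℝ, deriv (fun s => X 0 (fun m => x m s)) t ≠ 0)
    (haff : ∀ t : ℝ, ∀ i : Fin n, i ≠ 0 →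
      deriv (deriv (fun s => X i (fun m => x m s))) t
          * deriv (fun s => X 0 (fun m => x m s)) t
        = deriv (fun s => X i (fun m => x m s)) t
          * deriv (deriv (fun s => X 0 (fun m => x m s))) t) :
    ∀ t : ℝ, ∀ i : Fin n, i ≠ 0 →
      (∑ j ∈ Finset.univ.erase (0 : Fin n),
          (pdrv 0 (X 0) (fun m => x m t) * pdrv j (X i) (fun m => x m t)
            - pdrv j (X 0) (fun m => x m t) * pdrv 0 (X i) (fun m => x m t))
          * deriv (deriv (x j)) t)
      + (∑ k ∈ Finset.univ.erase (0 : Fin n), ∑ j ∈ Finset.univ.erase (0 : Fin n),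
          (pdrv k (X 0) (fun m => x m t) * pdrv j (X i) (fun m => x m t)
            - pdrv j (X 0) (fun m => x m t) * pdrv k (X i) (fun m => x m t))
          * deriv (x k) t * deriv (deriv (x j)) t)
      + (∑ j ∈ Finset.univ.erase (0 : Fin n), ∑ k ∈ Finset.univ.erase (0 : Fin n),
          ∑ l ∈ Finset.univ.erase (0 : Fin n),
          (pdrv l (X 0) (fun m => x m t) * pdrv k (pdrv j (X i)) (fun m => x m t)
            - pdrv k (pdrv j (X 0)) (fun m => x m t) * pdrv l (X i) (fun m => x m t))
          * deriv (x j) t * deriv (x k) t * deriv (x l) t)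
      + (∑ j ∈ Finset.univ.erase (0 : Fin n), ∑ l ∈ Finset.univ.erase (0 : Fin n),
          (2 * pdrv l (X 0) (fun m => x m t) * pdrv 0 (pdrv j (X i)) (fun m => x m t)
            - 2 * pdrv 0 (pdrv j (X 0)) (fun m => x m t) * pdrv l (X i) (fun m => x m t)
            + pdrv 0 (X 0) (fun m => x m t) * pdrv l (pdrv j (X i)) (fun m => x m t)
            - pdrv 0 (X i) (fun m => x m t) * pdrv l (pdrv j (X 0)) (fun m => x m t))
          * deriv (x j) t * deriv (x l) t)
      + (∑ j ∈ Finset.univ.erase (0 : Fin n),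
          (2 * pdrv 0 (X 0) (fun m => x m t) * pdrv 0 (pdrv j (X i)) (fun m => x m t)
            - 2 * pdrv 0 (pdrv j (X 0)) (fun m => x m t) * pdrv 0 (X i) (fun m => x m t)
            + pdrv j (X 0) (fun m => x m t) * pdrv 0 (pdrv 0 (X i)) (fun m => x m t)
            - pdrv 0 (pdrv 0 (X 0)) (fun m => x m t) * pdrv j (X i) (fun m => x m t))
          * deriv (x j) t)
      + (pdrv 0 (X 0) (fun m => x m t) * pdrv 0 (pdrv 0 (X i)) (fun m => x m t)
          - pdrv 0 (pdrv 0 (X 0)) (fun m => x m t) * pdrv 0 (X i) (fun m => x m t))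
      = 0 :=
  stmt13_general n X hX x hx0 hxC haff
end
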